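/- arXiv:1508.01961 — 2 statements merged into one kernel-verified Lean document; each statement's English description precedes it below -/
import Mathlib

section
/- Let T : X → Y be a strictly singular operator between Banach spaces and let ε > 0. If X is infinite-dimensional, then there exists an infinite-dimensional closed subspace A ⊆ X such that the restriction T|A has operator norm at most ε. -/
/-!
Strict singularity gives, inside every closed subspace of finite codimension, a unit vector `x`
with `‖T x‖` as small as we like; Hahn–Banach supplies a norming functional `f` for it, and the
next vector is taken in the kernels of all functionals chosen so far. The matrix `f i (x j)` is
then lower unitriangular with entries of modulus at most one, which bounds the `k`-th coefficient
of any finite combination `v = ∑ cᵢ xᵢ` by `2 ^ k ‖v‖`. Taking `‖T xₙ‖ ≤ ε / 2 · 4⁻ⁿ` therefore gives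
`‖T v‖ ≤ ε ‖v‖` on the span of the `xₙ`, hence on its closure, which is infinite-dimensional since
the `xₙ` are linearly independent.
-/

/-- A bounded linear operator between normed spaces is *strictly singular* if its restriction
to every infinite-dimensional closed subspace fails to be bounded below. -/
def StrictlySingular {X Y : Type*} [NormedAddCommGroup X] [NormedSpace ℝ X]
    [NormedAddCommGroup Y] [NormedSpace ℝ Y] (T : X →L[ℝ] Y) : Prop :=
  ∀ Z : Submodule ℝ X, IsClosed (Z : Set X) → ¬ FiniteDimensional ℝ Z →
    ¬ ∃ c : ℝ, 0 < c ∧ ∀ z ∈ Z, c * ‖z‖ ≤ ‖T z‖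

open Submodule Finset

theorem Module.Finite.of_finite_ker {R M N : Type*} [Ring R] [AddCommGroup M] [Module R M]
    [AddCommGroup N] [Module R N] [IsNoetherian R N] (L : M →ₗ[R] N)
    [Module.Finite R (LinearMap.ker L)] : Module.Finite R M :=
  have : (LinearMap.ker L).CoFG := CoFG.ker L
  .of_submodule_quotient (LinearMap.ker L)

section TriangularSystem

variable {𝕜 E : Type*} [NontriviallyNormedField 𝕜] [SeminormedAddCommGroup E] [NormedSpace 𝕜 E]

structure IsTriangularSystem (x : ℕ → E) (f : ℕ → StrongDual 𝕜 E) : Prop where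
  norm_le_one : ∀ n, ‖x n‖ ≤ 1
  opNorm_le_one : ∀ n, ‖f n‖ ≤ 1
  apply_self : ∀ n, f n (x n) = 1
  apply_of_lt : ∀ {i j}, i < j → f i (x j) = 0

namespace IsTriangularSystem

variable {x : ℕ → E} {f : ℕ → StrongDual 𝕜 E} (h : IsTriangularSystem x f)
include h

theorem apply_linearCombination (c : ℕ →₀ 𝕜) (k : ℕ) :
    f k (Finsupp.linearCombination 𝕜 x c) = ∑ i ∈ range (k + 1), c i * f k (x i) := by
  rw [Finsupp.linearCombination_apply, map_finsuppSum]
  simp only [map_smul, smul_eq_mul]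
  rw [Finsupp.sum_of_support_subset c subset_union_left _ (by simp)]
  refine (sum_subset subset_union_right fun i _ hi => ?_).symm
  simp [h.apply_of_lt (by simpa using hi : k < i)]

theorem norm_coeff_le (c : ℕ →₀ 𝕜) (k : ℕ) :
    ‖c k‖ ≤ 2 ^ k * ‖Finsupp.linearCombination 𝕜 x c‖ := by
  set v := Finsupp.linearCombination 𝕜 x c
  induction k using Nat.strong_induction_on with
  | _ k ih =>
    have hck : c k = f k v - ∑ i ∈ range k, c i * f k (x i) := by
      rw [h.apply_linearCombination, sum_range_succ, h.apply_self, mul_one, add_sub_cancel_left]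
    have hfk (y : E) : ‖f k y‖ ≤ ‖y‖ := by
      simpa using (f k).le_of_opNorm_le (h.opNorm_le_one k) y
    calc ‖c k‖ ≤ ‖v‖ + ∑ i ∈ range k, ‖c i‖ := by
          rw [hck]
          refine (norm_sub_le _ _).trans (add_le_add (hfk v) ?_)
          refine (norm_sum_le _ _).trans (sum_le_sum fun i _ => ?_)
          rw [norm_mul]
          exact mul_le_of_le_one_right (norm_nonneg _) ((hfk _).trans (h.norm_le_one i))
      _ ≤ ‖v‖ + ∑ i ∈ range k, 2 ^ i * ‖v‖ := by
          gcongr with i hi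
          exact ih i (mem_range.mp hi)
      _ = 2 ^ k * ‖v‖ := by
          rw [← sum_mul, geom_sum_eq (by norm_num : (2 : ℝ) ≠ 1)]
          ring

theorem linearIndependent : LinearIndependent 𝕜 x :=
  linearIndependent_iff.mpr fun c hc =>
    Finsupp.ext fun k => norm_le_zero_iff.mp (by simpa [hc] using h.norm_coeff_le c k)

theorem norm_map_le_of_mem_span {F : Type*} [SeminormedAddCommGroup F] [NormedSpace 𝕜 F]
    (T : E →L[𝕜] F) {ε : ℝ} (hT : ∀ n, ‖T (x n)‖ ≤ ε / 2 * (1 / 4) ^ n) {v : E}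
    (hv : v ∈ span 𝕜 (Set.range x)) : ‖T v‖ ≤ ε * ‖v‖ := by
  have hε : 0 ≤ ε := by linarith [norm_nonneg (T (x 0)), hT 0]
  rw [← Finsupp.range_linearCombination] at hv
  obtain ⟨c, rfl⟩ := hv
  set v := Finsupp.linearCombination 𝕜 x c
  calc ‖T v‖ = ‖∑ i ∈ c.support, c i • T (x i)‖ := by
        simp only [v, Finsupp.linearCombination_apply, map_finsuppSum, map_smul]
        rfl
    _ ≤ ∑ i ∈ c.support, 2 ^ i * ‖v‖ * (ε / 2 * (1 / 4) ^ i) := by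
        refine (norm_sum_le _ _).trans (sum_le_sum fun i _ => ?_)
        rw [norm_smul]
        exact mul_le_mul (h.norm_coeff_le c i) (hT i) (norm_nonneg _) (by positivity)
    _ = ε / 2 * ‖v‖ * ∑ i ∈ c.support, (1 / 2 : ℝ) ^ i := by
        rw [mul_sum]
        refine sum_congr rfl fun i _ => ?_
        rw [show (1 / 2 : ℝ) ^ i = 2 ^ i * (1 / 4) ^ i by rw [← mul_pow]; norm_num]
        ring
    _ ≤ ε / 2 * ‖v‖ * 2 := by
        gcongr
        exact (summable_geometric_two.sum_le_tsum _ fun i _ => by positivity).trans_eq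
          tsum_geometric_two
    _ = ε * ‖v‖ := by ring

end IsTriangularSystem

end TriangularSystem

theorem Submodule.norm_map_le_of_mem_topologicalClosure {𝕜 E F : Type*}
    [NontriviallyNormedField 𝕜] [SeminormedAddCommGroup E] [NormedSpace 𝕜 E]
    [SeminormedAddCommGroup F] [NormedSpace 𝕜 F] {S : Submodule 𝕜 E} (T : E →L[𝕜] F) {ε : ℝ}
    (hS : ∀ v ∈ S, ‖T v‖ ≤ ε * ‖v‖) : ∀ v ∈ S.topologicalClosure, ‖T v‖ ≤ ε * ‖v‖ := by
  intro v hv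
  rw [← SetLike.mem_coe, topologicalClosure_coe] at hv
  have hclosed : IsClosed {v : E | ‖T v‖ ≤ ε * ‖v‖} := isClosed_le (by fun_prop) (by fun_prop)
  exact closure_minimal hS hclosed hv

section StrictlySingular

variable {X Y : Type*} [NormedAddCommGroup X] [NormedSpace ℝ X]
    [NormedAddCommGroup Y] [NormedSpace ℝ Y] {T : X →L[ℝ] Y}

theorem StrictlySingular.exists_norm_eq_one_norm_apply_le (hT : StrictlySingular T)
    {Z : Submodule ℝ X} (hZc : IsClosed (Z : Set X)) (hZ : ¬ FiniteDimensional ℝ Z) {δ : ℝ}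
    (hδ : 0 < δ) : ∃ x ∈ Z, ‖x‖ = 1 ∧ ‖T x‖ ≤ δ := by
  have := hT Z hZc hZ
  push Not at this
  obtain ⟨z, hzZ, hz⟩ := this δ hδ
  have hz0 : z ≠ 0 := by rintro rfl; simp at hz
  refine ⟨(‖z‖⁻¹ : ℝ) • z, Z.smul_mem _ hzZ, norm_smul_inv_norm hz0, ?_⟩
  rw [map_smul, norm_smul, norm_inv, norm_norm, inv_mul_le_iff₀ (norm_pos_iff.mpr hz0)]
  linarith

theorem StrictlySingular.exists_isTriangularSystem (hT : StrictlySingular T)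
    (hX : ¬ FiniteDimensional ℝ X) {δ : ℕ → ℝ} (hδ : ∀ n, 0 < δ n) (hδ_anti : Antitone δ) :
    ∃ (x : ℕ → X) (f : ℕ → StrongDual ℝ X), IsTriangularSystem x f ∧ ∀ n, ‖T (x n)‖ ≤ δ n := by
  -- The first component is an index, taken beyond all earlier ones, along which `δ` decreases.
  have step (s : Finset (ℕ × X × StrongDual ℝ X)) : ∃ q : ℕ × X × StrongDual ℝ X,
      (‖q.2.1‖ ≤ 1 ∧ ‖q.2.2‖ ≤ 1 ∧ q.2.2 q.2.1 = 1 ∧ ‖T q.2.1‖ ≤ δ q.1) ∧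
        ∀ p ∈ s, p.1 < q.1 ∧ p.2.2 q.2.1 = 0 := by
    let L : X →L[ℝ] (s → ℝ) := ContinuousLinearMap.pi fun p => p.1.2.2
    have hL : ¬ FiniteDimensional ℝ (LinearMap.ker (L : X →ₗ[ℝ] (s → ℝ))) := fun _ =>
      hX (Module.Finite.of_finite_ker (L : X →ₗ[ℝ] (s → ℝ)))
    obtain ⟨y, hyL, hy1, hTy⟩ :=
      hT.exists_norm_eq_one_norm_apply_le L.isClosed_ker hL (hδ (s.sup Prod.fst + 1))
    obtain ⟨g, hg1, hgy⟩ := exists_dual_vector ℝ y (by rw [← norm_ne_zero_iff, hy1]; norm_num)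
    exact ⟨(s.sup Prod.fst + 1, y, g), ⟨hy1.le, hg1.le, by simp [hgy, hy1], hTy⟩,
      fun p hp => ⟨Nat.lt_succ_of_le (le_sup hp), congrFun hyL ⟨p, hp⟩⟩⟩
  obtain ⟨p, hp, hpq⟩ := exists_seq_of_forall_finset_exists _ _ fun s _ => step s
  have hmono : StrictMono fun n => (p n).1 := fun m n h => (hpq m n h).1
  exact ⟨fun n => (p n).2.1, fun n => (p n).2.2,
    ⟨fun n => (hp n).1, fun n => (hp n).2.1, fun n => (hp n).2.2.1, fun h => (hpq _ _ h).2⟩,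
    fun n => (hp n).2.2.2.trans (hδ_anti (hmono.id_le n))⟩

end StrictlySingular

theorem strictlySingular_exists_subspace_small_norm_general
    {X Y : Type*} [NormedAddCommGroup X] [NormedSpace ℝ X]
    [NormedAddCommGroup Y] [NormedSpace ℝ Y]
    (T : X →L[ℝ] Y) (hT : StrictlySingular T)
    (hX : ¬ FiniteDimensional ℝ X) (ε : ℝ) (hε : 0 < ε) :
    ∃ A : Submodule ℝ X, IsClosed (A : Set X) ∧ ¬ FiniteDimensional ℝ A ∧
      ∀ x ∈ A, ‖T x‖ ≤ ε * ‖x‖ := by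
  have hδ_anti : Antitone fun n : ℕ => ε / 2 * (1 / 4 : ℝ) ^ n := fun m n hmn =>
    mul_le_mul_of_nonneg_left (pow_le_pow_of_le_one (by norm_num) (by norm_num) hmn)
      (by positivity)
  obtain ⟨x, f, hxf, hTx⟩ := hT.exists_isTriangularSystem hX (fun n => by positivity) hδ_anti
  let A := (span ℝ (Set.range x)).topologicalClosure
  have hxA (n : ℕ) : x n ∈ A := le_topologicalClosure _ (subset_span (Set.mem_range_self n))
  refine ⟨A, isClosed_topologicalClosure _, fun _ => ?_,
    norm_map_le_of_mem_topologicalClosure T fun v hv => hxf.norm_map_le_of_mem_span T hTx hv⟩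
  exact Module.Finite.not_linearIndependent_of_infinite (fun n => (⟨x n, hxA n⟩ : A))
    (.of_comp A.subtype hxf.linearIndependent)

/-- if `T : X → Y` is strictly singular, `X` infinite dimensional, and `ε > 0`,
there is an infinite-dimensional closed subspace `A ⊆ X` with `‖T|_A‖ ≤ ε`. -/
theorem strictlySingular_exists_subspace_small_norm
    {X Y : Type*} [NormedAddCommGroup X] [NormedSpace ℝ X] [CompleteSpace X]
    [NormedAddCommGroup Y] [NormedSpace ℝ Y] [CompleteSpace Y]
    (T : X →L[ℝ] Y) (hT : StrictlySingular T)
    (hX : ¬ FiniteDimensional ℝ X) (ε : ℝ) (hε : 0 < ε) :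
    ∃ A : Submodule ℝ X, IsClosed (A : Set X) ∧ ¬ FiniteDimensional ℝ A ∧
      ∀ x ∈ A, ‖T x‖ ≤ ε * ‖x‖ :=
  strictlySingular_exists_subspace_small_norm_general T hT hX ε hε
end

section
/- Let (eₙ) be a Schauder basis of a Banach space X and suppose that for each L ∈ ℕ there is a constant c(L) such that any two normalized block sequences of (eₙ) differing in at most L terms are c(L)-equivalent. If for every block sequence (yₙ), every K ∈ ℕ and every m ∈ ℕ there exists l > m with span{yₙ : m ≤ n ≤ l} not K-embeddable into the closed span of {eₙ : n ≥ l}, then for every block sequence (yₙ) there exists an increasing sequence of successive intervals (Iⱼ) of ℕ such that for all K, span{yₙ : n ∈ I_K} does not K-embed into the closed span of {eₙ : n ∉ I_K}, and consequently for every infinite A ⊆ ℕ, the closed span of (yₙ) does not embed into the closed span of {eₙ : n ∉ ∪_{j∈A} Iⱼ}. -/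
/-!
Build the intervals one after another. If the next interval starts at `a`, let `c = c(a)` and
take `l > a` such that `span{yₙ : a ≤ n ≤ l}` does not `⌈c²K⌉`-embed into `[eₙ : n ≥ l]`, and let
the interval be `[a, l + a]`. The normalized basis vectors indexed by its complement
`{n < a} ∪ {n > l + a}` differ in only `a` places from the normalized tail `(e_{n+l+1})`, so their
closed span `c²`-embeds into `[eₙ : n ≥ l]`. Composing, a `K`-embedding of
`span{yₙ : n ∈ [a, l + a]}` into `[eₙ : n ∉ [a, l + a]]` would give a forbidden `c²K`-embedding.
For an infinite `A`, a `K`-embedding of `[yₙ]` into `[eₙ : n ∉ ⋃_{j∈A} I_j]` restricts to a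
`j`-embedding of `span{yₙ : n ∈ I_j}` for every `j ∈ A` with `j ≥ K`.
-/

def IsBasicSeq {E : Type*} [NormedAddCommGroup E] [NormedSpace ℝ E] (e : ℕ → E) : Prop :=
  (∀ n, e n ≠ 0) ∧ ∃ C : ℝ, 0 < C ∧ ∀ (a : ℕ → ℝ) (n m : ℕ), n ≤ m →
    ‖∑ i ∈ Finset.range n, a i • e i‖ ≤ C * ‖∑ i ∈ Finset.range m, a i • e i‖

/-- A normalized block sequence of the basis `e`. -/
def IsBlockSeq {X : Type*} [NormedAddCommGroup X] [NormedSpace ℝ X] (e y : ℕ → X) : Prop :=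
  ∃ p : ℕ → ℕ, StrictMono p ∧ ∀ n, ‖y n‖ = 1 ∧
    y n ∈ Submodule.span ℝ (e '' Set.Ico (p n) (p (n + 1)))

/-- `Z` `K`-embeds into `W`. -/
def Embeds (K : ℝ) (Z W : Type*) [NormedAddCommGroup Z] [NormedSpace ℝ Z]
    [NormedAddCommGroup W] [NormedSpace ℝ W] : Prop :=
  ∃ T : Z →L[ℝ] W, ∀ z : Z, ‖z‖ ≤ ‖T z‖ ∧ ‖T z‖ ≤ K * ‖z‖

open Finset

namespace Embeds

variable {K K' : ℝ} {Z W V : Type*} [NormedAddCommGroup Z] [NormedSpace ℝ Z]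
  [NormedAddCommGroup W] [NormedSpace ℝ W] [NormedAddCommGroup V] [NormedSpace ℝ V]

lemma mono (hKK' : K ≤ K') (h : Embeds K Z W) : Embeds K' Z W := by
  obtain ⟨T, hT⟩ := h
  exact ⟨T, fun z => ⟨(hT z).1, (hT z).2.trans (by gcongr)⟩⟩

lemma trans (h₁ : Embeds K Z W) (h₂ : Embeds K' W V) (hK' : 0 ≤ K') :
    Embeds (K' * K) Z V := by
  obtain ⟨T, hT⟩ := h₁
  obtain ⟨S, hS⟩ := h₂
  refine ⟨S.comp T, fun z => ⟨(hT z).1.trans (hS (T z)).1, ?_⟩⟩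
  calc ‖S (T z)‖ ≤ K' * ‖T z‖ := (hS (T z)).2
    _ ≤ K' * (K * ‖z‖) := by gcongr; exact (hT z).2
    _ = K' * K * ‖z‖ := by ring

variable {X : Type*} [NormedAddCommGroup X] [NormedSpace ℝ X]

lemma mono_left {S T : Submodule ℝ X} (hST : S ≤ T) (h : Embeds K T Z) : Embeds K S Z := by
  obtain ⟨U, hU⟩ := h
  exact ⟨U.comp (S.subtypeL.codRestrict T fun x => hST x.2), fun z => hU ⟨z, hST z.2⟩⟩

lemma mono_right {S T : Submodule ℝ X} (hST : S ≤ T) (h : Embeds K Z S) : Embeds K Z T := by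
  obtain ⟨U, hU⟩ := h
  exact ⟨(S.subtypeL.codRestrict T fun x => hST x.2).comp U, fun z => hU z⟩

end Embeds

section

variable {X : Type*} [NormedAddCommGroup X] [NormedSpace ℝ X]

lemma Finsupp.linearCombination_eq_sum_range {R M : Type*} [Semiring R] [AddCommMonoid M]
    [Module R M] (v : ℕ → M) {f : ℕ →₀ R} {m : ℕ} (hm : f.support ⊆ range m) :
    Finsupp.linearCombination R v f = ∑ i ∈ range m, f i • v i :=
  linearCombination_apply_of_mem_supported R ((mem_supported R f).2 (by exact_mod_cast hm))

lemma IsBasicSeq.linearIndependent {e : ℕ → X} (he : IsBasicSeq e) :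
    LinearIndependent ℝ e := by
  obtain ⟨hne, C, -, hC⟩ := he
  refine linearIndependent_iff.2 fun f hf => ?_
  obtain ⟨m, hm⟩ := f.support.exists_nat_subset_range
  rw [Finsupp.linearCombination_eq_sum_range e hm] at hf
  have hpartial : ∀ n ≤ m, ∑ i ∈ range n, f i • e i = 0 := fun n hn =>
    norm_le_zero_iff.1 <| by simpa [hf] using hC f n m hn
  ext k
  by_cases hk : k < m
  · have hk_succ := hpartial (k + 1) hk
    rw [sum_range_succ, hpartial k hk.le, zero_add, smul_eq_zero] at hk_succ
    exact hk_succ.resolve_right (hne k)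
  · exact Finsupp.notMem_support_iff.1 fun h => hk (mem_range.1 (hm h))

def IsSeqEquivalent (c : ℝ) (u z : ℕ → X) : Prop :=
  ∀ (n : ℕ) (a : ℕ → ℝ),
    c⁻¹ * ‖∑ k ∈ range n, a k • z k‖ ≤ ‖∑ k ∈ range n, a k • u k‖ ∧
      ‖∑ k ∈ range n, a k • u k‖ ≤ c * ‖∑ k ∈ range n, a k • z k‖

namespace IsSeqEquivalent

variable {c : ℝ} {u z : ℕ → X}

lemma norm_linearCombination_le (h : IsSeqEquivalent c u z) (hc : 0 < c) (f : ℕ →₀ ℝ) :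
    ‖Finsupp.linearCombination ℝ z f‖ ≤ c * ‖Finsupp.linearCombination ℝ u f‖ ∧
      ‖Finsupp.linearCombination ℝ u f‖ ≤ c * ‖Finsupp.linearCombination ℝ z f‖ := by
  obtain ⟨m, hm⟩ := f.support.exists_nat_subset_range
  rw [Finsupp.linearCombination_eq_sum_range z hm, Finsupp.linearCombination_eq_sum_range u hm]
  exact ⟨(inv_mul_le_iff₀ hc).1 (h m f).1, (h m f).2⟩

lemma embeds_closure_span [CompleteSpace X] (h : IsSeqEquivalent c u z) (hc : 0 < c)
    (hu : LinearIndependent ℝ u) :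
    Embeds (c ^ 2) (Submodule.span ℝ (Set.range u)).topologicalClosure
      (Submodule.span ℝ (Set.range z)).topologicalClosure := by
  set U := Submodule.span ℝ (Set.range u)
  set V := (Submodule.span ℝ (Set.range z)).topologicalClosure
  let L : U →ₗ[ℝ] X := c • (Finsupp.linearCombination ℝ z ∘ₗ hu.repr)
  have hL : ∀ x : U, ‖x‖ ≤ ‖L x‖ ∧ ‖L x‖ ≤ c ^ 2 * ‖x‖ := by
    intro x
    obtain ⟨hzu, huz⟩ := h.norm_linearCombination_le hc (hu.repr x)
    rw [hu.linearCombination_repr] at hzu huz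
    simp only [L, LinearMap.smul_apply, LinearMap.comp_apply, norm_smul, Real.norm_of_nonneg hc.le]
    exact ⟨huz, by rw [sq, mul_assoc]; gcongr; exact hzu⟩
  have hLV : ∀ x, L x ∈ V := fun x => V.smul_mem c <| Submodule.le_topologicalClosure _ <|
    Finsupp.range_linearCombination (R := ℝ) (v := z) ▸ LinearMap.mem_range_self _ _
  let T : U →L[ℝ] V := (L.codRestrict V hLV).mkContinuous (c ^ 2) fun x => (hL x).2
  let ι : U →L[ℝ] U.topologicalClosure :=
    U.subtypeL.codRestrict _ fun x => U.le_topologicalClosure x.2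
  have hι_dense : DenseRange ι :=
    (denseRange_inclusion_iff (Submodule.le_topologicalClosure U)).2 subset_rfl
  have hι_inducing : IsUniformInducing ι :=
    (AddMonoidHomClass.isometry_of_norm ι fun _ => rfl).isUniformInducing
  refine ⟨T.extend ι, fun w => hι_dense.induction_on w ?_ fun x => ?_⟩
  · exact (isClosed_le continuous_norm (T.extend ι).continuous.norm).inter
      (isClosed_le (T.extend ι).continuous.norm (continuous_const.mul continuous_norm))
  · rw [T.extend_eq hι_dense hι_inducing]
    exact hL x

end IsSeqEquivalent

variable {e : ℕ → X}

lemma isBlockSeq_normalized_comp (hne : ∀ n, e n ≠ 0) {σ : ℕ → ℕ} (hσ : StrictMono σ) :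
    IsBlockSeq e fun n => ‖e (σ n)‖⁻¹ • e (σ n) :=
  ⟨σ, hσ, fun n => ⟨norm_smul_inv_norm (hne _), Submodule.smul_mem _ _
    (Submodule.subset_span ⟨σ n, ⟨le_rfl, hσ n.lt_succ_self⟩, rfl⟩)⟩⟩

lemma LinearIndependent.normalized (hli : LinearIndependent ℝ e) (hne : ∀ n, e n ≠ 0) :
    LinearIndependent ℝ fun n => ‖e n‖⁻¹ • e n :=
  hli.units_smul fun n => Units.mk0 _ (inv_ne_zero (norm_ne_zero_iff.2 (hne n)))

lemma span_range_normalized_comp (hne : ∀ n, e n ≠ 0) (σ : ℕ → ℕ) :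
    Submodule.span ℝ (Set.range fun n => ‖e (σ n)‖⁻¹ • e (σ n)) =
      Submodule.span ℝ (e '' Set.range σ) := by
  refine le_antisymm (Submodule.span_le.2 ?_) (Submodule.span_le.2 ?_)
  · rintro _ ⟨n, rfl⟩
    exact Submodule.smul_mem _ _ (Submodule.subset_span ⟨σ n, ⟨n, rfl⟩, rfl⟩)
  · rintro _ ⟨_, ⟨n, rfl⟩, rfl⟩
    rw [← smul_inv_smul₀ (norm_ne_zero_iff.2 (hne (σ n))) (e (σ n))]
    exact Submodule.smul_mem _ _ (Submodule.subset_span ⟨n, rfl⟩)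

lemma embeds_closure_span_skip [CompleteSpace X] (hne : ∀ n, e n ≠ 0)
    (hli : LinearIndependent ℝ e) {a : ℕ} {c : ℝ} (hc0 : 0 < c)
    (hc : ∀ u z, IsBlockSeq e u → IsBlockSeq e z →
      (∃ S : Finset ℕ, S.card ≤ a ∧ ∀ n ∉ S, u n = z n) → IsSeqEquivalent c u z) (d : ℕ) :
    Embeds (c ^ 2) (Submodule.span ℝ (e '' {n | n < a ∨ a + d ≤ n})).topologicalClosure
      (Submodule.span ℝ (e '' {n | d ≤ n})).topologicalClosure := by
  set σ : ℕ → ℕ := fun n => if n < a then n else n + d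
  have hσ : StrictMono σ := by
    intro m n hmn
    simp only [σ]
    split_ifs <;> omega
  have hrangeσ : Set.range σ = {n | n < a ∨ a + d ≤ n} := by
    ext n
    refine ⟨?_, fun hn => ?_⟩
    · rintro ⟨k, rfl⟩
      simp only [σ, Set.mem_ofPred_eq]
      split_ifs <;> omega
    · rcases hn with hn | hn
      · exact ⟨n, if_pos hn⟩
      · exact ⟨n - d, by simp only [σ]; rw [if_neg (by omega)]; omega⟩
  have hrange_add : Set.range (· + d) = {n | d ≤ n} := by
    ext n
    simp only [Set.mem_range, Set.mem_ofPred_eq]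
    exact ⟨fun ⟨k, hk⟩ => by omega, fun hn => ⟨n - d, by omega⟩⟩
  have hequiv := hc _ _ (isBlockSeq_normalized_comp hne hσ)
    (isBlockSeq_normalized_comp hne (add_left_strictMono (a := d)))
    ⟨range a, (card_range a).le, fun n hn => by simp only [σ, if_neg (mem_range.not.1 hn)]⟩
  have hembeds := hequiv.embeds_closure_span hc0 ((hli.normalized hne).comp σ hσ.injective)
  rwa [span_range_normalized_comp hne, span_range_normalized_comp hne, hrangeσ, hrange_add]
    at hembeds

lemma not_embeds_Icc_of_not_embeds_tail [CompleteSpace X] (hne : ∀ n, e n ≠ 0)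
    (hli : LinearIndependent ℝ e) {a : ℕ} {c : ℝ} (hc0 : 0 < c)
    (hc : ∀ u z, IsBlockSeq e u → IsBlockSeq e z →
      (∃ S : Finset ℕ, S.card ≤ a ∧ ∀ n ∉ S, u n = z n) → IsSeqEquivalent c u z)
    {y : ℕ → X} {K K' : ℝ} (hKK' : c ^ 2 * K ≤ K') {l : ℕ}
    (hl : ¬ Embeds K' (Submodule.span ℝ (y '' Set.Icc a l))
      (Submodule.span ℝ (e '' {n | l ≤ n})).topologicalClosure) :
    ¬ Embeds K (Submodule.span ℝ (y '' Set.Icc a (l + a)))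
      (Submodule.span ℝ (e '' {n | n ∉ Set.Icc a (l + a)})).topologicalClosure := by
  intro hK
  have hcompl : {n | n ∉ Set.Icc a (l + a)} = {n | n < a ∨ a + (l + 1) ≤ n} := by
    ext n
    simp only [Set.mem_ofPred_eq, Set.mem_Icc]
    omega
  have hskip := embeds_closure_span_skip hne hli hc0 hc (l + 1)
  rw [← hcompl] at hskip
  refine hl (((hK.trans hskip (sq_nonneg c)).mono_left ?_).mono_right ?_ |>.mono hKK')
  · exact Submodule.span_mono (Set.image_mono (Set.Icc_subset_Icc_right (by omega)))
  · exact Submodule.topologicalClosure_mono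
      (Submodule.span_mono (Set.image_mono fun n (hn : l + 1 ≤ n) => (by omega : l ≤ n)))

lemma not_embeds_closure_span_range_of_forall_not_embeds {y : ℕ → X} {I : ℕ → Set ℕ}
    (h : ∀ j : ℕ, ¬ Embeds j (Submodule.span ℝ (y '' I j))
      (Submodule.span ℝ (e '' {n | n ∉ I j})).topologicalClosure)
    {A : Set ℕ} (hA : A.Infinite) (K : ℝ) :
    ¬ Embeds K (Submodule.span ℝ (Set.range y)).topologicalClosure
      (Submodule.span ℝ (e '' {n | ∀ j ∈ A, n ∉ I j})).topologicalClosure := by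
  intro hK
  obtain ⟨j, hjA, hKj⟩ := hA.exists_gt ⌈K⌉₊
  refine h j (((hK.mono_left ?_).mono_right ?_).mono ?_)
  · exact (Submodule.span_mono (Set.image_subset_range _ _)).trans
      (Submodule.le_topologicalClosure _)
  · exact Submodule.topologicalClosure_mono
      (Submodule.span_mono (Set.image_mono fun n hn => hn j hjA))
  · exact (Nat.le_ceil K).trans (by exact_mod_cast hKj.le)

end

lemma exists_successive_intervals (P : ℕ → ℕ → ℕ → Prop)
    (h : ∀ j a, ∃ r, a ≤ r ∧ P j a r) :
    ∃ l r : ℕ → ℕ, (∀ j, l j ≤ r j) ∧ (∀ j, r j < l (j + 1)) ∧ ∀ j, P j (l j) (r j) := by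
  choose R hR hP using h
  let l : ℕ → ℕ := fun j => Nat.rec 0 (fun j a => R j a + 1) j
  exact ⟨l, fun j => R j (l j), fun j => hR j (l j), fun j => Nat.lt_succ_self _,
    fun j => hP j (l j)⟩

theorem tight_intervals_from_tail_estimates_general
    {X : Type*} [NormedAddCommGroup X] [NormedSpace ℝ X] [CompleteSpace X]
    (e : ℕ → X) (he : IsBasicSeq e)
    (hc : ∀ L : ℕ, ∃ c : ℝ, 1 ≤ c ∧ ∀ y z : ℕ → X, IsBlockSeq e y → IsBlockSeq e z →
      (∃ S : Finset ℕ, S.card ≤ L ∧ ∀ n ∉ S, y n = z n) →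
      ∀ (n : ℕ) (a : ℕ → ℝ),
        c⁻¹ * ‖∑ k ∈ Finset.range n, a k • z k‖ ≤ ‖∑ k ∈ Finset.range n, a k • y k‖ ∧
        ‖∑ k ∈ Finset.range n, a k • y k‖ ≤ c * ‖∑ k ∈ Finset.range n, a k • z k‖)
    (htight : ∀ y : ℕ → X, IsBlockSeq e y → ∀ K : ℕ, ∀ m : ℕ, ∃ l : ℕ, m < l ∧
      ¬ Embeds (K : ℝ) ↥(Submodule.span ℝ (y '' Set.Icc m l))
          ↥((Submodule.span ℝ (e '' {n | l ≤ n})).topologicalClosure)) :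
    ∀ y : ℕ → X, IsBlockSeq e y →
      ∃ l r : ℕ → ℕ, (∀ j, l j ≤ r j) ∧ (∀ j, r j < l (j + 1)) ∧
        (∀ K : ℕ, ¬ Embeds (K : ℝ) ↥(Submodule.span ℝ (y '' (Set.Icc (l K) (r K))))
          ↥((Submodule.span ℝ (e '' {n | n ∉ Set.Icc (l K) (r K)})).topologicalClosure)) ∧
        ∀ A : Set ℕ, A.Infinite →
          ¬ ∃ K : ℝ, 0 < K ∧
            Embeds K ↥((Submodule.span ℝ (Set.range y)).topologicalClosure)
              ↥((Submodule.span ℝ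
                  (e '' {n | ∀ j ∈ A, n ∉ Set.Icc (l j) (r j)})).topologicalClosure) := by
  choose c hc1 hc using hc
  intro y hy
  have hstep : ∀ j a : ℕ, ∃ r, a ≤ r ∧ ¬ Embeds j (Submodule.span ℝ (y '' Set.Icc a r))
      (Submodule.span ℝ (e '' {n | n ∉ Set.Icc a r})).topologicalClosure := by
    intro j a
    obtain ⟨l, -, hl⟩ := htight y hy ⌈c a ^ 2 * j⌉₊ a
    exact ⟨l + a, by omega, not_embeds_Icc_of_not_embeds_tail he.1 he.linearIndependent
      (by linarith [hc1 a]) (hc a) (Nat.le_ceil _) hl⟩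
  obtain ⟨l, r, hlr, hrl, hIcc⟩ := exists_successive_intervals _ hstep
  exact ⟨l, r, hlr, hrl, hIcc, fun A hA ⟨K, _, hK⟩ =>
    not_embeds_closure_span_range_of_forall_not_embeds hIcc hA K hK⟩

/-- given a basis `(eₙ)` with the `c(L)`-perturbation property, if for every
block sequence, every `K` and every `m` there is `l > m` with `span{yₙ : m ≤ n ≤ l}` not
`K`-embeddable into the closed span of the tail `{eₙ : n ≥ l}`, then every block sequence
`(yₙ)` admits successive intervals `(Iⱼ) = ([l j, r j])` with `span{yₙ : n ∈ I_K}` not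
`K`-embeddable into the closed span of `{eₙ : n ∉ I_K}` for every `K`, and hence for every
infinite `A ⊆ ℕ` the closed span of `(yₙ)` does not embed into the closed span of
`{eₙ : n ∉ ⋃_{j∈A} Iⱼ}`. -/
theorem tight_intervals_from_tail_estimates
    {X : Type*} [NormedAddCommGroup X] [NormedSpace ℝ X] [CompleteSpace X]
    (e : ℕ → X) (he : IsBasicSeq e)
    (hdense : DenseRange fun a : ℕ →₀ ℝ => ∑ n ∈ a.support, a n • e n)
    (hc : ∀ L : ℕ, ∃ c : ℝ, 1 ≤ c ∧ ∀ y z : ℕ → X, IsBlockSeq e y → IsBlockSeq e z →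
      (∃ S : Finset ℕ, S.card ≤ L ∧ ∀ n ∉ S, y n = z n) →
      ∀ (n : ℕ) (a : ℕ → ℝ),
        c⁻¹ * ‖∑ k ∈ Finset.range n, a k • z k‖ ≤ ‖∑ k ∈ Finset.range n, a k • y k‖ ∧
        ‖∑ k ∈ Finset.range n, a k • y k‖ ≤ c * ‖∑ k ∈ Finset.range n, a k • z k‖)
    (htight : ∀ y : ℕ → X, IsBlockSeq e y → ∀ K : ℕ, ∀ m : ℕ, ∃ l : ℕ, m < l ∧
      ¬ Embeds (K : ℝ) ↥(Submodule.span ℝ (y '' Set.Icc m l))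
          ↥((Submodule.span ℝ (e '' {n | l ≤ n})).topologicalClosure)) :
    ∀ y : ℕ → X, IsBlockSeq e y →
      ∃ l r : ℕ → ℕ, (∀ j, l j ≤ r j) ∧ (∀ j, r j < l (j + 1)) ∧
        (∀ K : ℕ, ¬ Embeds (K : ℝ) ↥(Submodule.span ℝ (y '' (Set.Icc (l K) (r K))))
          ↥((Submodule.span ℝ (e '' {n | n ∉ Set.Icc (l K) (r K)})).topologicalClosure)) ∧
        ∀ A : Set ℕ, A.Infinite →
          ¬ ∃ K : ℝ, 0 < K ∧
            Embeds K ↥((Submodule.span ℝ (Set.range y)).topologicalClosure)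
              ↥((Submodule.span ℝ
                  (e '' {n | ∀ j ∈ A, n ∉ Set.Icc (l j) (r j)})).topologicalClosure) :=
  tight_intervals_from_tail_estimates_general e he hc htight
end
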